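/- Let (C_j)_{j∈J} be a finite family of nonempty closed convex subsets of H with weights ω_j > 0 summing to 1, and suppose ∩_{j∈J} C_j ≠ ∅. Then a point x satisfies Σ_{j∈J} ω_j (x − proj_{C_j} x) = 0 if and only if x ∈ ∩_{j∈J} C_j; i.e., the consistent problem and its relaxation (with K = ∅) have the same solutions. -/

import Mathlib

/-!
If `z` lies in every `C j`, the variational inequality of the projection gives
`‖x - proj j x‖² ≤ ⟪x - proj j x, x - z⟫`. Summing with the weights, the vanishing of
`∑ ω j • (x - proj j x)` forces `∑ ω j ‖x - proj j x‖² ≤ 0`, so every residual vanishes and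
`x = proj j x ∈ C j`. Conversely a point of `C j` is its own best approximation.
-/

open RealInnerProductSpace

theorem eq_of_forall_norm_sub_le_of_mem {E : Type*} [NormedAddCommGroup E] {s : Set E} {x p : E}
    (hx : x ∈ s) (hbest : ∀ c ∈ s, ‖x - p‖ ≤ ‖x - c‖) : p = x := by
  have h := hbest x hx
  rw [sub_self, norm_zero, norm_le_zero_iff, sub_eq_zero] at h
  exact h.symm

section BestApproximation

variable {H : Type*} [NormedAddCommGroup H] [InnerProductSpace ℝ H] {s : Set H} {x p : H}

theorem real_inner_sub_le_zero_of_forall_norm_sub_le (hs : Convex ℝ s) (hp : p ∈ s)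
    (hbest : ∀ c ∈ s, ‖x - p‖ ≤ ‖x - c‖) : ∀ w ∈ s, ⟪x - p, w - p⟫ ≤ 0 := by
  have : Nonempty s := ⟨⟨p, hp⟩⟩
  rw [← norm_eq_iInf_iff_real_inner_le_zero hs hp]
  refine le_antisymm (le_ciInf fun w => hbest w w.2) ?_
  exact ciInf_le ⟨0, Set.forall_mem_range.mpr fun _ => norm_nonneg _⟩ (⟨p, hp⟩ : s)

theorem norm_sub_sq_le_real_inner_of_forall_norm_sub_le (hs : Convex ℝ s) (hp : p ∈ s)
    (hbest : ∀ c ∈ s, ‖x - p‖ ≤ ‖x - c‖) {z : H} (hz : z ∈ s) :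
    ‖x - p‖ ^ 2 ≤ ⟪x - p, x - z⟫ := by
  have hvar := real_inner_sub_le_zero_of_forall_norm_sub_le hs hp hbest z hz
  have hsplit : ⟪x - p, x - z⟫ = ‖x - p‖ ^ 2 - ⟪x - p, z - p⟫ := by
    rw [← real_inner_self_eq_norm_sq, ← inner_sub_right, sub_sub_sub_cancel_right]
  linarith

end BestApproximation

theorem forall_eq_zero_of_sum_smul_eq_zero_of_norm_sq_le_inner {H : Type*}
    [NormedAddCommGroup H] [InnerProductSpace ℝ H] {J : Type*} [Fintype J]
    {v : J → H} {ω : J → ℝ} (hω : ∀ j, 0 < ω j) (y : H) (hv : ∀ j, ‖v j‖ ^ 2 ≤ ⟪v j, y⟫)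
    (hsum : ∑ j, ω j • v j = 0) : ∀ j, v j = 0 := by
  have hnonneg : ∀ j ∈ Finset.univ, 0 ≤ ω j * ‖v j‖ ^ 2 := fun j _ =>
    mul_nonneg (hω j).le (sq_nonneg _)
  have hle : ∑ j, ω j * ‖v j‖ ^ 2 ≤ 0 :=
    calc ∑ j, ω j * ‖v j‖ ^ 2 ≤ ∑ j, ω j * ⟪v j, y⟫ :=
          Finset.sum_le_sum fun j _ => mul_le_mul_of_nonneg_left (hv j) (hω j).le
      _ = ⟪∑ j, ω j • v j, y⟫ := by simp only [sum_inner, real_inner_smul_left]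
      _ = 0 := by rw [hsum, inner_zero_left]
  intro j
  have hj := (Finset.sum_eq_zero_iff_of_nonneg hnonneg).mp
    (le_antisymm hle (Finset.sum_nonneg hnonneg)) j (Finset.mem_univ j)
  simpa [(hω j).ne'] using hj

theorem stmt19_general {H : Type*} [NormedAddCommGroup H] [InnerProductSpace ℝ H]
    {J : Type*} [Fintype J]
    (C : J → Set H)
    (hcv : ∀ j, Convex ℝ (C j))
    (proj : J → H → H)
    (hmem : ∀ j x, proj j x ∈ C j)
    (hbest : ∀ j x, ∀ c ∈ C j, ‖x - proj j x‖ ≤ ‖x - c‖)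
    (ω : J → ℝ) (hω : ∀ j, 0 < ω j)
    (hint : (⋂ j, C j).Nonempty) :
    ∀ x : H, (∑ j, ω j • (x - proj j x)) = 0 ↔ x ∈ ⋂ j, C j := by
  intro x
  rw [Set.mem_iInter]
  constructor
  · intro hzero j
    obtain ⟨z, hz⟩ := hint
    rw [Set.mem_iInter] at hz
    have hres := forall_eq_zero_of_sum_smul_eq_zero_of_norm_sq_le_inner hω (x - z)
      (fun j => norm_sub_sq_le_real_inner_of_forall_norm_sub_le (hcv j) (hmem j x)
        (hbest j x) (hz j)) hzero j
    rw [sub_eq_zero] at hres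
    exact hres ▸ hmem j x
  · intro hx
    simp [fun j => eq_of_forall_norm_sub_le_of_mem (hx j) (hbest j x)]

theorem stmt19 {H : Type*} [NormedAddCommGroup H] [InnerProductSpace ℝ H]
    {J : Type*} [Fintype J]
    (C : J → Set H)
    (hne : ∀ j, (C j).Nonempty) (hcl : ∀ j, IsClosed (C j)) (hcv : ∀ j, Convex ℝ (C j))
    (proj : J → H → H)
    (hmem : ∀ j x, proj j x ∈ C j)
    (hbest : ∀ j x, ∀ c ∈ C j, ‖x - proj j x‖ ≤ ‖x - c‖)
    (ω : J → ℝ) (hω : ∀ j, 0 < ω j) (hsum : ∑ j, ω j = 1)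
    (hint : (⋂ j, C j).Nonempty) :
    ∀ x : H, (∑ j, ω j • (x - proj j x)) = 0 ↔ x ∈ ⋂ j, C j :=
  stmt19_general C hcv proj hmem hbest ω hω hint
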